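/- Fix an integer k \ge 2 and let F_k(y) = (2y^2 - 4y + 3)/\sqrt{y(4y^4 - 12y^3 + 9y^2 + 10k y - 12k)} and G_k(y) = \exp(15(2k - y)/(2y(2y-3)^2)). Then the function v_1(y) = F_k(y) G_k(y) is strictly decreasing on [2, \infty). -/

import Mathlib

set_option maxHeartbeats 1000000


noncomputable def Fk (k : ℕ) (y : ℝ) : ℝ :=
  (2 * y ^ 2 - 4 * y + 3) /
    Real.sqrt (y * (4 * y ^ 4 - 12 * y ^ 3 + 9 * y ^ 2 + 10 * k * y - 12 * k))

noncomputable def Gk (k : ℕ) (y : ℝ) : ℝ :=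
  Real.exp (15 * (2 * k - y) / (2 * y * (2 * y - 3) ^ 2))

noncomputable def Lfun (K : ℝ) (y : ℝ) : ℝ :=
  Real.log (2 * y ^ 2 - 4 * y + 3) -
    1 / 2 * Real.log (y * (4 * y ^ 4 - 12 * y ^ 3 + 9 * y ^ 2 + 10 * K * y - 12 * K)) +
    15 * (2 * K - y) / (2 * y * (2 * y - 3) ^ 2)

lemma N_pos {y : ℝ} (hy : 2 ≤ y) : 0 < 2 * y ^ 2 - 4 * y + 3 := by nlinarith

lemma P_pos {K y : ℝ} (hK : 2 ≤ K) (hy : 2 ≤ y) :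
    0 < y * (4 * y ^ 4 - 12 * y ^ 3 + 9 * y ^ 2 + 10 * K * y - 12 * K) := by
  have h1 : 0 < 4 * y ^ 4 - 12 * y ^ 3 + 9 * y ^ 2 + 10 * K * y - 12 * K := by
    nlinarith [sq_nonneg (2 * y ^ 2 - 3 * y),
      mul_nonneg (by linarith : (0:ℝ) ≤ K - 2) (by linarith : (0:ℝ) ≤ 10 * y - 12)]
  have h2 : (0:ℝ) < y := by linarith
  exact mul_pos h2 h1

lemma V_pos {y : ℝ} (hy : 2 ≤ y) : 0 < 2 * y * (2 * y - 3) ^ 2 := by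
  have h1 : (1:ℝ) ≤ 2 * y - 3 := by linarith
  nlinarith

lemma Lfun_hasDeriv (K : ℝ) (hK : 2 ≤ K) {y : ℝ} (hy : 2 ≤ y) :
    HasDerivAt (Lfun K)
      ((4 * y - 4) / (2 * y ^ 2 - 4 * y + 3) -
        1 / 2 * ((20 * y ^ 4 - 48 * y ^ 3 + 27 * y ^ 2 + 20 * K * y - 12 * K) /
          (y * (4 * y ^ 4 - 12 * y ^ 3 + 9 * y ^ 2 + 10 * K * y - 12 * K))) +
        ((-15) * (2 * y * (2 * y - 3) ^ 2) - 15 * (2 * K - y) * (24 * y ^ 2 - 48 * y + 18)) /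
          (2 * y * (2 * y - 3) ^ 2) ^ 2) y := by
  have hN := N_pos hy
  have hP := P_pos hK hy
  have hV := V_pos hy
  have hid := hasDerivAt_id y
  -- derivative of N
  have hNd : HasDerivAt (fun x : ℝ => 2 * x ^ 2 - 4 * x + 3) (4 * y - 4) y := by
    have h := (((hid.pow 2).const_mul (2:ℝ)).sub (hid.const_mul (4:ℝ))).add_const (3:ℝ)
    exact h.congr_deriv (by simp; ring)
  -- derivative of P
  have hQd : HasDerivAt (fun x : ℝ => 4 * x ^ 4 - 12 * x ^ 3 + 9 * x ^ 2 + 10 * K * x - 12 * K)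
      (16 * y ^ 3 - 36 * y ^ 2 + 18 * y + 10 * K) y := by
    have h := (((((hid.pow 4).const_mul (4:ℝ)).sub ((hid.pow 3).const_mul (12:ℝ))).add
      ((hid.pow 2).const_mul (9:ℝ))).add (hid.const_mul (10 * K))).sub_const (12 * K)
    exact h.congr_deriv (by simp; ring)
  have hPd : HasDerivAt
      (fun x : ℝ => x * (4 * x ^ 4 - 12 * x ^ 3 + 9 * x ^ 2 + 10 * K * x - 12 * K))
      (20 * y ^ 4 - 48 * y ^ 3 + 27 * y ^ 2 + 20 * K * y - 12 * K) y := by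
    have h := hid.mul hQd
    exact h.congr_deriv (by simp; ring)
  -- derivative of V
  have hVd : HasDerivAt (fun x : ℝ => 2 * x * (2 * x - 3) ^ 2) (24 * y ^ 2 - 48 * y + 18) y := by
    have h := (hid.const_mul (2:ℝ)).mul (((hid.const_mul (2:ℝ)).sub_const (3:ℝ)).pow 2)
    exact h.congr_deriv (by simp; ring)
  -- derivative of numerator of exp argument
  have hud : HasDerivAt (fun x : ℝ => 15 * (2 * K - x)) (-15) y := by
    have h := ((hasDerivAt_const y (2 * K)).sub hid).const_mul (15:ℝ)
    exact h.congr_deriv (by simp)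
  have h1 : HasDerivAt (fun x : ℝ => Real.log (2 * x ^ 2 - 4 * x + 3))
      ((4 * y - 4) / (2 * y ^ 2 - 4 * y + 3)) y := hNd.log hN.ne'
  have h2 : HasDerivAt
      (fun x : ℝ => 1 / 2 *
        Real.log (x * (4 * x ^ 4 - 12 * x ^ 3 + 9 * x ^ 2 + 10 * K * x - 12 * K)))
      (1 / 2 * ((20 * y ^ 4 - 48 * y ^ 3 + 27 * y ^ 2 + 20 * K * y - 12 * K) /
        (y * (4 * y ^ 4 - 12 * y ^ 3 + 9 * y ^ 2 + 10 * K * y - 12 * K)))) y :=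
    (hPd.log hP.ne').const_mul (1 / 2)
  have h3 : HasDerivAt (fun x : ℝ => 15 * (2 * K - x) / (2 * x * (2 * x - 3) ^ 2))
      (((-15) * (2 * y * (2 * y - 3) ^ 2) - 15 * (2 * K - y) * (24 * y ^ 2 - 48 * y + 18)) /
        (2 * y * (2 * y - 3) ^ 2) ^ 2) y := by
    have h := hud.div hVd hV.ne'
    exact h
  exact (h1.sub h2).add h3

lemma Lfun_strictAnti (K : ℝ) (hK : 2 ≤ K) : StrictAntiOn (Lfun K) (Set.Ici (2:ℝ)) := by
  apply strictAntiOn_of_deriv_neg (convex_Ici 2)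
  · exact fun y hy => ((Lfun_hasDeriv K hK hy).continuousAt).continuousWithinAt
  · intro y hy
    rw [interior_Ici] at hy
    have hy2 : 2 ≤ y := le_of_lt hy
    have hN := N_pos hy2
    have hP := P_pos hK hy2
    have hV := V_pos hy2
    rw [(Lfun_hasDeriv K hK hy2).deriv]
    have hM : (0:ℝ) < (2 * y ^ 2 - 4 * y + 3) *
        (y * (4 * y ^ 4 - 12 * y ^ 3 + 9 * y ^ 2 + 10 * K * y - 12 * K)) *
        (2 * y * (2 * y - 3) ^ 2) ^ 2 := by positivity
    have ht : (0:ℝ) ≤ y - 2 := by linarith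
    have hs : (0:ℝ) ≤ K - 2 := by linarith
    have H : ∀ i j : ℕ, (0:ℝ) ≤ (y - 2) ^ i * (K - 2) ^ j := fun i j =>
      mul_nonneg (pow_nonneg ht i) (pow_nonneg hs j)
    have hE : (0:ℝ) <
      71840 +
      93248 * ((K-2)^1) +
      25920 * ((K-2)^2) +
      446688 * ((y-2)^1) +
      574512 * ((y-2)^1 * (K-2)^1) +
      149040 * ((y-2)^1 * (K-2)^2) +
      1173648 * ((y-2)^2) +
      1488864 * ((y-2)^2 * (K-2)^1) +
      341640 * ((y-2)^2 * (K-2)^2) +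
      1766504 * ((y-2)^3) +
      2206188 * ((y-2)^3 * (K-2)^1) +
      408960 * ((y-2)^3 * (K-2)^2) +
      1726482 * ((y-2)^4) +
      2134608 * ((y-2)^4 * (K-2)^1) +
      274320 * ((y-2)^4 * (K-2)^2) +
      1169952 * ((y-2)^5) +
      1446600 * ((y-2)^5 * (K-2)^1) +
      97920 * ((y-2)^5 * (K-2)^2) +
      582996 * ((y-2)^6) +
      708096 * ((y-2)^6 * (K-2)^1) +
      14400 * ((y-2)^6 * (K-2)^2) +
      237936 * ((y-2)^7) +
      242304 * ((y-2)^7 * (K-2)^1) +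
      97584 * ((y-2)^8) +
      50304 * ((y-2)^8 * (K-2)^1) +
      43072 * ((y-2)^9) +
      4480 * ((y-2)^9 * (K-2)^1) +
      15168 * ((y-2)^10) +
      3072 * ((y-2)^11) +
      256 * ((y-2)^12) := by
      have h10 := H 1 0
      nlinarith [H 0 1, H 0 2, H 1 0, H 1 1, H 1 2, H 2 0, H 2 1, H 2 2, H 3 0, H 3 1, H 3 2,
        H 4 0, H 4 1, H 4 2, H 5 0, H 5 1, H 5 2, H 6 0, H 6 1, H 6 2, H 7 0, H 7 1,
        H 8 0, H 8 1, H 9 0, H 9 1, H 10 0, H 11 0, H 12 0]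
    rw [show (4 * y - 4) / (2 * y ^ 2 - 4 * y + 3) -
        1 / 2 * ((20 * y ^ 4 - 48 * y ^ 3 + 27 * y ^ 2 + 20 * K * y - 12 * K) /
          (y * (4 * y ^ 4 - 12 * y ^ 3 + 9 * y ^ 2 + 10 * K * y - 12 * K))) +
        ((-15) * (2 * y * (2 * y - 3) ^ 2) - 15 * (2 * K - y) * (24 * y ^ 2 - 48 * y + 18)) /
          (2 * y * (2 * y - 3) ^ 2) ^ 2 =
        (-(71840 +
      93248 * ((K-2)^1) +
      25920 * ((K-2)^2) +
      446688 * ((y-2)^1) +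
      574512 * ((y-2)^1 * (K-2)^1) +
      149040 * ((y-2)^1 * (K-2)^2) +
      1173648 * ((y-2)^2) +
      1488864 * ((y-2)^2 * (K-2)^1) +
      341640 * ((y-2)^2 * (K-2)^2) +
      1766504 * ((y-2)^3) +
      2206188 * ((y-2)^3 * (K-2)^1) +
      408960 * ((y-2)^3 * (K-2)^2) +
      1726482 * ((y-2)^4) +
      2134608 * ((y-2)^4 * (K-2)^1) +
      274320 * ((y-2)^4 * (K-2)^2) +
      1169952 * ((y-2)^5) +
      1446600 * ((y-2)^5 * (K-2)^1) +
      97920 * ((y-2)^5 * (K-2)^2) +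
      582996 * ((y-2)^6) +
      708096 * ((y-2)^6 * (K-2)^1) +
      14400 * ((y-2)^6 * (K-2)^2) +
      237936 * ((y-2)^7) +
      242304 * ((y-2)^7 * (K-2)^1) +
      97584 * ((y-2)^8) +
      50304 * ((y-2)^8 * (K-2)^1) +
      43072 * ((y-2)^9) +
      4480 * ((y-2)^9 * (K-2)^1) +
      15168 * ((y-2)^10) +
      3072 * ((y-2)^11) +
      256 * ((y-2)^12))) /
        ((2 * y ^ 2 - 4 * y + 3) *
          (y * (4 * y ^ 4 - 12 * y ^ 3 + 9 * y ^ 2 + 10 * K * y - 12 * K)) *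
          (2 * y * (2 * y - 3) ^ 2) ^ 2) from by
      rw [mul_div_assoc', div_sub_div _ _ hN.ne' hP.ne', div_add_div _ _ (mul_pos hN hP).ne' (by positivity),
        div_eq_div_iff (by positivity) hM.ne']
      ring]
    exact div_neg_of_neg_of_pos (by linarith) hM

lemma v1_eq (k : ℕ) (hk : 2 ≤ k) {y : ℝ} (hy : 2 ≤ y) :
    Fk k y * Gk k y = Real.exp (Lfun (k : ℝ) y) := by
  have hK : (2:ℝ) ≤ (k:ℝ) := by exact_mod_cast hk
  have hN := N_pos hy
  have hP := P_pos hK hy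
  rw [Fk, Gk, Lfun, Real.exp_add, Real.exp_sub, Real.exp_log hN]
  congr 1
  rw [show (1:ℝ) / 2 * Real.log (y * (4 * y ^ 4 - 12 * y ^ 3 + 9 * y ^ 2 + 10 * (k:ℝ) * y - 12 * (k:ℝ)))
      = Real.log (y * (4 * y ^ 4 - 12 * y ^ 3 + 9 * y ^ 2 + 10 * (k:ℝ) * y - 12 * (k:ℝ))) / 2 from by
    ring, ← Real.log_sqrt hP.le, Real.exp_log (Real.sqrt_pos.mpr hP)]

theorem v1_strictAnti (k : ℕ) (hk : 2 ≤ k) :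
    StrictAntiOn (fun y => Fk k y * Gk k y) (Set.Ici (2 : ℝ)) := by
  have hK : (2:ℝ) ≤ (k:ℝ) := by exact_mod_cast hk
  intro a ha b hb hab
  simp only [Set.mem_Ici] at ha hb
  show Fk k b * Gk k b < Fk k a * Gk k a
  rw [v1_eq k hk ha, v1_eq k hk hb]
  exact Real.exp_lt_exp.mpr (Lfun_strictAnti (k:ℝ) hK ha hb hab)
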